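/- For all p ∈ [2, 4], s ∈ [4/3, 2], and r ∈ [0, 1], the inequality p(1−r)(r^s−1)(r^s−r) + 2sr(r^{s−1}−r^{s+1}) + 2r(r^{2s}−1) ≥ 0 holds. -/

import Mathlib

/-!
Put `y = r ^ (s - 1)`, so that `r ^ s = r y`. The expression equals
`(p - 2)(1 - r) r (1 - r y)(1 - y) + 2 r ((s - 1)(1 - r²) y - r (1 - y²))`.
The first summand is nonnegative because `p ≥ 2`. For the second, write `b = s - 1 ∈ [0, 1]`
and `r = e^(-t)` with `t ≥ 0`: it is `4 r² y (b sinh t - sinh (b t))`, nonnegative because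
`sinh` is convex on `[0, ∞)` and vanishes at `0`.
-/

open Real Set

theorem Real.convexOn_sinh : ConvexOn ℝ (Ici 0) sinh := by
  refine MonotoneOn.convexOn_of_deriv (convex_Ici 0) continuous_sinh.continuousOn
    differentiable_sinh.differentiableOn ?_
  rw [interior_Ici, deriv_sinh]
  intro x hx y hy hxy
  rw [cosh_le_cosh, abs_of_pos hx, abs_of_pos hy]
  exact hxy

theorem Real.sinh_mul_le_mul_sinh {b t : ℝ} (hb0 : 0 ≤ b) (hb1 : b ≤ 1) (ht : 0 ≤ t) :
    sinh (b * t) ≤ b * sinh t := by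
  have h := convexOn_sinh.2 ht self_mem_Ici hb0 (sub_nonneg.2 hb1) (add_sub_cancel b 1)
  simpa using h

theorem Real.inv_rpow_sub_rpow_le {r b : ℝ} (hr0 : 0 < r) (hr1 : r ≤ 1) (hb0 : 0 ≤ b) (hb1 : b ≤ 1) :
    (r ^ b)⁻¹ - r ^ b ≤ b * (r⁻¹ - r) := by
  have h := sinh_mul_le_mul_sinh hb0 hb1 (neg_nonneg.2 (log_nonpos hr0.le hr1))
  rw [mul_neg, sinh_neg, sinh_neg, sinh_eq, sinh_eq, exp_neg, exp_neg, exp_log hr0, mul_comm b,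
    ← rpow_def_of_pos hr0] at h
  linarith

theorem Real.mul_one_sub_rpow_sq_le {r b : ℝ} (hr0 : 0 ≤ r) (hr1 : r ≤ 1) (hb0 : 0 ≤ b) (hb1 : b ≤ 1) :
    r * (1 - (r ^ b) ^ 2) ≤ b * (1 - r ^ 2) * r ^ b := by
  rcases hr0.eq_or_lt with rfl | hr0
  · rw [zero_mul]
    exact mul_nonneg (by norm_num [hb0]) (rpow_nonneg le_rfl b)
  have hy : 0 < r ^ b := rpow_pos_of_pos hr0 b
  have h := mul_le_mul_of_nonneg_left (inv_rpow_sub_rpow_le hr0 hr1 hb0 hb1) (mul_pos hr0 hy).le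
  field_simp at h
  linarith

theorem stmt_1 (p s r : ℝ) (hp : p ∈ Set.Icc (2 : ℝ) 4)
    (hs : s ∈ Set.Icc (4/3 : ℝ) 2) (hr : r ∈ Set.Icc (0 : ℝ) 1) :
    0 ≤ p * (1 - r) * (r ^ s - 1) * (r ^ s - r)
      + 2 * s * r * (r ^ (s - 1) - r ^ (s + 1))
      + 2 * r * (r ^ (2 * s) - 1) := by
  obtain ⟨hp2, -⟩ := hp
  obtain ⟨hs1, hs2⟩ := hs
  obtain ⟨hr0, hr1⟩ := hr
  have h1 : r ^ s = r ^ (s - 1) * r := by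
    rw [← rpow_add_one' hr0 (by linarith), sub_add_cancel]
  have h2 : r ^ (s + 1) = r ^ s * r := rpow_add_one' hr0 (by linarith)
  have h3 : r ^ (2 * s) = (r ^ s) ^ 2 := by rw [mul_comm, rpow_mul hr0, rpow_two]
  have key := mul_one_sub_rpow_sq_le hr0 hr1 (b := s - 1) (by linarith) (by linarith)
  have hy1 : r ^ (s - 1) ≤ 1 := rpow_le_one hr0 hr1 (by linarith)
  rw [h3, h2, h1]
  set y := r ^ (s - 1)
  have hry : r * y ≤ 1 := mul_le_one₀ hr1 (rpow_nonneg hr0 _) hy1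
  calc 0 ≤ (p - 2) * (1 - r) * r * (1 - r * y) * (1 - y)
        + 2 * r * ((s - 1) * (1 - r ^ 2) * y - r * (1 - y ^ 2)) :=
      add_nonneg
        (mul_nonneg (mul_nonneg (mul_nonneg (mul_nonneg (by linarith) (by linarith)) hr0)
          (by linarith)) (by linarith))
        (mul_nonneg (by positivity) (sub_nonneg.2 key))
    _ = _ := by ring
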